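/- arXiv:1901.03893 — 3 statements merged into one kernel-verified Lean document; each statement's English description precedes it below -/
import Mathlib

section
/- Let N ≥ 1, let m > 0 be a real number, and let q_1, …, q_N be real numbers. Over all pairs (α, b) where α = (α_1,…,α_N) has α_i > 0 and ∑_i α_i = 1, and b = (b_1,…,b_N) has b_i > 0 and ∑_i α_i b_i = 1, the objective ∑_{i=1}^N α_i (m·log₂ b_i + q_i − log₂ α_i) attains its maximum value log₂(∑_{i=1}^N 2^{q_i}), and the maximum is attained at b_i = 1 and α_i = 2^{q_i}/(∑_{j=1}^N 2^{q_j}) for all i. -/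
open Finset

lemma jensen_log {N : ℕ} (w x : Fin N → ℝ) (hw : ∀ i, 0 < w i)
    (hw1 : (∑ i, w i) = 1) (hx : ∀ i, 0 < x i) :
    ∑ i, w i * Real.log (x i) ≤ Real.log (∑ i, w i * x i) := by
  have hc := strictConcaveOn_log_Ioi.concaveOn
  have := hc.le_map_sum (t := Finset.univ) (w := w) (p := x)
    (fun i _ => (hw i).le) hw1 (fun i _ => hx i)
  simpa [smul_eq_mul] using this

lemma jensen_logb {N : ℕ} (w x : Fin N → ℝ) (hw : ∀ i, 0 < w i)
    (hw1 : (∑ i, w i) = 1) (hx : ∀ i, 0 < x i) :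
    ∑ i, w i * Real.logb 2 (x i) ≤ Real.logb 2 (∑ i, w i * x i) := by
  have h := jensen_log w x hw hw1 hx
  have h2 : (0:ℝ) < Real.log 2 := Real.log_pos one_lt_two
  have : ∑ i, w i * Real.logb 2 (x i)
      = (∑ i, w i * Real.log (x i)) / Real.log 2 := by
    rw [Finset.sum_div]
    exact Finset.sum_congr rfl fun i _ => (mul_div_assoc _ _ _).symm
  rw [this, Real.logb]
  exact div_le_div_of_nonneg_right h h2.le

/-- Joint optimization of mixture coefficients and powers: over all `(α, b)`
with `αᵢ > 0`, `∑ αᵢ = 1`, `bᵢ > 0` and `∑ αᵢ bᵢ = 1`, the objective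
`∑ αᵢ (m log₂ bᵢ + qᵢ − log₂ αᵢ)` is at most `log₂ (∑ 2^{qᵢ})`, and this bound
is attained at the feasible point `bᵢ = 1`, `αᵢ = 2^{qᵢ} / ∑ⱼ 2^{qⱼ}`. -/
theorem stmt4 (N : ℕ) (hN : 1 ≤ N) (m : ℝ) (hm : 0 < m) (q : Fin N → ℝ) :
    (∀ α b : Fin N → ℝ, (∀ i, 0 < α i) → (∑ i, α i) = 1 →
        (∀ i, 0 < b i) → (∑ i, α i * b i) = 1 →
        ∑ i, α i * (m * Real.logb 2 (b i) + q i - Real.logb 2 (α i)) ≤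
          Real.logb 2 (∑ i, (2 : ℝ) ^ (q i))) ∧
    (∀ α b : Fin N → ℝ,
      (α = fun i => (2 : ℝ) ^ (q i) / (∑ j, (2 : ℝ) ^ (q j))) →
      (b = fun _ => (1 : ℝ)) →
      (∀ i, 0 < α i) ∧ (∑ i, α i) = 1 ∧ (∀ i, 0 < b i) ∧
        (∑ i, α i * b i) = 1 ∧
        ∑ i, α i * (m * Real.logb 2 (b i) + q i - Real.logb 2 (α i)) =
          Real.logb 2 (∑ i, (2 : ℝ) ^ (q i))) := by
  have hq : ∀ i, (0:ℝ) < (2:ℝ) ^ (q i) := fun i => Real.rpow_pos_of_pos two_pos _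
  have hS : (0:ℝ) < ∑ j, (2:ℝ) ^ (q j) := by
    have : (Finset.univ : Finset (Fin N)).Nonempty := by
      simpa [Finset.univ_nonempty_iff] using Fin.pos_iff_nonempty.mp (by omega)
    exact Finset.sum_pos (fun i _ => hq i) this
  constructor
  · intro α b hα hα1 hb hab
    have key : ∀ i, α i * (m * Real.logb 2 (b i) + q i - Real.logb 2 (α i))
        = m * (α i * Real.logb 2 (b i)) + α i * Real.logb 2 ((2:ℝ) ^ (q i) / α i) := by
      intro i
      rw [Real.logb_div (ne_of_gt (hq i)) (ne_of_gt (hα i)),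
        Real.logb_rpow (by norm_num : (0:ℝ) < 2) (by norm_num : (2:ℝ) ≠ 1)]
      ring
    rw [Finset.sum_congr rfl (fun i _ => key i), Finset.sum_add_distrib,
      ← Finset.mul_sum]
    have h1 : ∑ i, α i * Real.logb 2 (b i) ≤ 0 := by
      have := jensen_logb α b hα hα1 hb
      rwa [hab, Real.logb_one] at this
    have h2 : ∑ i, α i * Real.logb 2 ((2:ℝ) ^ (q i) / α i)
        ≤ Real.logb 2 (∑ i, (2:ℝ) ^ (q i)) := by
      have := jensen_logb α (fun i => (2:ℝ) ^ (q i) / α i) hα hα1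
        (fun i => div_pos (hq i) (hα i))
      have heq : (∑ i, α i * ((2:ℝ) ^ (q i) / α i)) = ∑ i, (2:ℝ) ^ (q i) := by
        exact Finset.sum_congr rfl fun i _ => mul_div_cancel₀ _ (ne_of_gt (hα i))
      rwa [heq] at this
    nlinarith [mul_nonpos_of_nonneg_of_nonpos hm.le h1]
  · intro α b hαdef hbdef
    subst hαdef hbdef
    have hα : ∀ i, 0 < (2:ℝ) ^ (q i) / (∑ j, (2:ℝ) ^ (q j)) :=
      fun i => div_pos (hq i) hS
    have hsum : (∑ i, (2:ℝ) ^ (q i) / (∑ j, (2:ℝ) ^ (q j))) = 1 := by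
      rw [← Finset.sum_div, div_self (ne_of_gt hS)]
    refine ⟨hα, hsum, fun i => one_pos, by simpa using hsum, ?_⟩
    have key : ∀ i, (2:ℝ) ^ (q i) / (∑ j, (2:ℝ) ^ (q j)) *
        (m * Real.logb 2 (1:ℝ) + q i -
          Real.logb 2 ((2:ℝ) ^ (q i) / (∑ j, (2:ℝ) ^ (q j))))
        = (2:ℝ) ^ (q i) / (∑ j, (2:ℝ) ^ (q j)) *
            Real.logb 2 (∑ j, (2:ℝ) ^ (q j)) := by
      intro i
      rw [Real.logb_div (ne_of_gt (hq i)) (ne_of_gt hS),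
        Real.logb_rpow (by norm_num : (0:ℝ) < 2) (by norm_num : (2:ℝ) ≠ 1), Real.logb_one]
      ring
    rw [Finset.sum_congr rfl (fun i _ => key i), ← Finset.sum_mul, hsum, one_mul]
end

section
/- Let N ≥ 1 and let α_1, …, α_N be positive reals with ∑_{i=1}^N α_i = 1. For each i let d_i : ℝ → (0,∞), and for each pair i ≠ j let e_{ij} : ℝ → (0,∞), be functions such that d_i(γ)/e_{ij}(γ) → 0 as γ → +∞ for all i ≠ j. Then the difference [−∑_{i=1}^N α_i log₂( α_i/d_i(γ) + ∑_{j≠i} α_j/e_{ij}(γ) )] − [∑_{i=1}^N α_i log₂( d_i(γ)/α_i )] converges to 0 as γ → +∞. -/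
open Finset Filter Topology

/-!
Multiplying the argument of the `i`-th logarithm by `dᵢ/αᵢ` turns the `i`-th summand of the
difference into `−αᵢ log₂(1 + ∑_{j≠i} (αⱼ/αᵢ)(dᵢ/e_{ij}))`, and each ratio `dᵢ/e_{ij}` tends to `0`.
-/

theorem Real.logb_div_add_add_logb_div {b a x s : ℝ} (ha : a ≠ 0) (hx : x ≠ 0)
    (h : 1 + x / a * s ≠ 0) :
    Real.logb b (a / x + s) + Real.logb b (x / a) = Real.logb b (1 + x / a * s) := by
  have hprod : (a / x + s) * (x / a) = 1 + x / a * s := by field_simp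
  have hsum : a / x + s ≠ 0 := by
    rintro hzero
    rw [hzero, zero_mul] at hprod
    exact h hprod.symm
  rw [← Real.logb_mul hsum (div_ne_zero hx ha), hprod]

theorem tendsto_mul_sum_div_nhds_zero {ι α : Type*} {l : Filter α} (s : Finset ι)
    (c : ι → ℝ) {x : α → ℝ} {y : ι → α → ℝ}
    (h : ∀ j ∈ s, Tendsto (fun t => x t / y j t) l (𝓝 0)) :
    Tendsto (fun t => x t * ∑ j ∈ s, c j / y j t) l (𝓝 0) := by
  have hterms : Tendsto (fun t => ∑ j ∈ s, c j * (x t / y j t)) l (𝓝 (∑ _j ∈ s, c _j * 0)) :=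
    tendsto_finsetSum s fun j hj => (h j hj).const_mul (c j)
  simp only [mul_zero, sum_const_zero] at hterms
  refine hterms.congr fun t => ?_
  rw [mul_sum]
  exact sum_congr rfl fun j _ => by ring

theorem tendsto_mul_logb_div_add_add_mul_logb_div {α : Type*} {l : Filter α} {b a : ℝ}
    (ha : a ≠ 0) {x s : α → ℝ} (hx : ∀ t, x t ≠ 0)
    (hs : Tendsto (fun t => x t / a * s t) l (𝓝 0)) :
    Tendsto (fun t => a * Real.logb b (a / x t + s t) + a * Real.logb b (x t / a)) l (𝓝 0) := by
  have hone : Tendsto (fun t => 1 + x t / a * s t) l (𝓝 1) := by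
    simpa using hs.const_add 1
  have hlog := (hone.logb one_ne_zero (b := b)).const_mul a
  rw [Real.logb_one, mul_zero] at hlog
  refine hlog.congr' ?_
  filter_upwards [hone.eventually_ne one_ne_zero] with t ht
  rw [← mul_add, Real.logb_div_add_add_logb_div ha (hx t) ht]

theorem stmt7_general (N : ℕ) (α : Fin N → ℝ)
    (hα : ∀ i, 0 < α i)
    (d : Fin N → ℝ → ℝ) (hd : ∀ i γ, 0 < d i γ)
    (e : Fin N → Fin N → ℝ → ℝ)
    (hlim : ∀ i j, i ≠ j →
      Tendsto (fun γ => d i γ / e i j γ) atTop (nhds 0)) :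
    Tendsto (fun γ =>
        (-∑ i, α i * Real.logb 2
            (α i / d i γ + ∑ j ∈ Finset.univ.erase i, α j / e i j γ)) -
          ∑ i, α i * Real.logb 2 (d i γ / α i))
      atTop (nhds 0) := by
  have hcross : ∀ i, Tendsto (fun γ => d i γ / α i * ∑ j ∈ univ.erase i, α j / e i j γ)
      atTop (𝓝 0) := fun i =>
    tendsto_mul_sum_div_nhds_zero _ α fun j hj => by
      simpa only [div_right_comm, zero_div] using
        (hlim i j (ne_of_mem_erase hj).symm).div_const (α i)
  have hterms := tendsto_finsetSum univ fun i _ =>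
    tendsto_mul_logb_div_add_add_mul_logb_div (b := 2) (hα i).ne' (fun γ => (hd i γ).ne')
      (hcross i)
  simpa only [sum_add_distrib, sum_const_zero, neg_add', neg_zero] using hterms.neg

/-- Analytic core of Appendix A: if every cross term `e i j (γ)` dominates
`d i (γ)` as `γ → ∞`, then the Gaussian-mixture rate
`−∑ᵢ αᵢ log₂(αᵢ/dᵢ(γ) + ∑_{j≠i} αⱼ/e_{ij}(γ))` approaches the upper bound
`∑ᵢ αᵢ log₂(dᵢ(γ)/αᵢ)`. -/
theorem stmt7 (N : ℕ) (hN : 1 ≤ N) (α : Fin N → ℝ)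
    (hα : ∀ i, 0 < α i) (hαs : ∑ i, α i = 1)
    (d : Fin N → ℝ → ℝ) (hd : ∀ i γ, 0 < d i γ)
    (e : Fin N → Fin N → ℝ → ℝ) (he : ∀ i j, i ≠ j → ∀ γ, 0 < e i j γ)
    (hlim : ∀ i j, i ≠ j →
      Tendsto (fun γ => d i γ / e i j γ) atTop (nhds 0)) :
    Tendsto (fun γ =>
        (-∑ i, α i * Real.logb 2
            (α i / d i γ + ∑ j ∈ Finset.univ.erase i, α j / e i j γ)) -
          ∑ i, α i * Real.logb 2 (d i γ / α i))
      atTop (nhds 0) :=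
  stmt7_general N α hα d hd e hlim
end

section
/- Let A and B be n×n complex Hermitian positive semidefinite matrices with rank(A + B) > rank(A). Then det(2·I + γ·(A + B)) / det(I + γ·A) → +∞ as γ → +∞ (both determinants being positive reals for γ ≥ 0). -/
open Finset Filter Matrix
open scoped ComplexOrder

/-! Diagonalising `M ⪰ 0`, `det (c • 1 + γ • M) = ∏ i, (c + γ λᵢ)` is a polynomial in `γ` whose
degree is the number of nonzero eigenvalues, i.e. `rank M`, and whose leading coefficient is
positive. A quotient of two such polynomials tends to `+∞` when the numerator has the larger
degree, which is what `rank A < rank (A + B)` provides. -/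

open Polynomial Unitary

namespace Matrix.IsHermitian

variable {𝕜 ι : Type*} [RCLike 𝕜] [Fintype ι] [DecidableEq ι] {M : Matrix ι ι 𝕜}

theorem det_smul_one_add_smul (hM : M.IsHermitian) (c γ : ℝ) :
    ((c : 𝕜) • (1 : Matrix ι ι 𝕜) + (γ : 𝕜) • M).det
      = ((∏ i, (c + γ * hM.eigenvalues i) : ℝ) : 𝕜) := by
  have hconj : (c : 𝕜) • (1 : Matrix ι ι 𝕜) + (γ : 𝕜) • M = conjStarAlgAut 𝕜 _
      hM.eigenvectorUnitary (diagonal fun i => ((c + γ * hM.eigenvalues i : ℝ) : 𝕜)) := by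
    conv_lhs => rw [hM.spectral_theorem]
    rw [← map_one (conjStarAlgAut 𝕜 _ hM.eigenvectorUnitary), ← map_smul, ← map_smul, ← map_add]
    congr 1
    ext i j
    by_cases h : i = j <;>
      simp [h, diagonal, Algebra.algebraMap_eq_smul_one, add_smul, mul_smul]
  rw [hconj, det_map, det_diagonal, RCLike.ofReal_prod]

end Matrix.IsHermitian

theorem natDegree_prod_C_mul_X_add_C {ι K : Type*} [Fintype ι] [Field K] [DecidableEq K] {a : K}
    (l : ι → K) (ha : a ≠ 0) :
    (∏ i, (C (l i) * X + C a)).natDegree = Fintype.card {i // l i ≠ 0} := by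
  have hne (i : ι) : C (l i) * X + C a ≠ 0 := fun h => ha (by simpa using congrArg (coeff · 0) h)
  rw [natDegree_prod _ _ fun i _ => hne i, Fintype.card_subtype, Finset.card_filter]
  refine sum_congr rfl fun i _ => ?_
  by_cases h : l i = 0 <;> simp [h]

section OrderedField

variable {ι K : Type*} [Fintype ι] [NormedField K] [LinearOrder K] [IsStrictOrderedRing K]
  {a : K} (l : ι → K)

theorem leadingCoeff_prod_C_mul_X_add_C_pos (ha : 0 < a) (hl : ∀ i, 0 ≤ l i) :
    0 < (∏ i, (C (l i) * X + C a)).leadingCoeff := by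
  rw [leadingCoeff_prod]
  refine prod_pos fun i _ => ?_
  rcases (hl i).eq_or_lt with h | h
  · simp [← h, ha]
  · rwa [leadingCoeff_linear h.ne']

theorem tendsto_prod_add_mul_div_prod_add_mul_atTop [OrderTopology K] {κ : Type*} [Fintype κ]
    {b : K} (m : κ → K) (ha : 0 < a) (hb : 0 < b) (hl : ∀ i, 0 ≤ l i) (hm : ∀ j, 0 ≤ m j)
    (hcard : Fintype.card {j // m j ≠ 0} < Fintype.card {i // l i ≠ 0}) :
    Tendsto (fun γ => (∏ i, (a + γ * l i)) / ∏ j, (b + γ * m j)) atTop atTop := by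
  have hP := leadingCoeff_prod_C_mul_X_add_C_pos l ha hl
  have hQ := leadingCoeff_prod_C_mul_X_add_C_pos m hb hm
  have hdeg : (∏ j, (C (m j) * X + C b)).degree < (∏ i, (C (l i) * X + C a)).degree := by
    rwa [← natDegree_lt_natDegree_iff (leadingCoeff_ne_zero.mp hQ.ne'),
      natDegree_prod_C_mul_X_add_C l ha.ne', natDegree_prod_C_mul_X_add_C m hb.ne']
  convert div_tendsto_atTop_of_degree_gt' _ _ hdeg (div_pos hP hQ) using 2 with γ
  simp only [eval_prod, eval_add, eval_mul, eval_C, eval_X]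
  ring_nf

end OrderedField

/-- If `A`, `B` are Hermitian PSD with `rank (A + B) > rank A`, then
`det (2 I + γ (A + B)) / det (I + γ A) → ∞` as `γ → ∞`; both determinants are
positive reals for `γ ≥ 0`. -/
theorem stmt9 (n : ℕ) (A B : Matrix (Fin n) (Fin n) ℂ)
    (hA : A.PosSemidef) (hB : B.PosSemidef)
    (hrank : A.rank < (A + B).rank) :
    (∀ γ : ℝ, 0 ≤ γ →
      (∃ t : ℝ, 0 < t ∧
        ((2 : ℂ) • (1 : Matrix (Fin n) (Fin n) ℂ) + (γ : ℂ) • (A + B)).det = (t : ℂ)) ∧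
      (∃ t : ℝ, 0 < t ∧
        ((1 : Matrix (Fin n) (Fin n) ℂ) + (γ : ℂ) • A).det = (t : ℂ))) ∧
    Tendsto (fun γ : ℝ =>
        (((2 : ℂ) • (1 : Matrix (Fin n) (Fin n) ℂ) + (γ : ℂ) • (A + B)).det).re /
          (((1 : Matrix (Fin n) (Fin n) ℂ) + (γ : ℂ) • A).det).re)
      atTop atTop := by
  have hAB := hA.add hB
  have det_num (γ : ℝ) : ((2 : ℂ) • (1 : Matrix (Fin n) (Fin n) ℂ) + (γ : ℂ) • (A + B)).det
      = ((∏ i, (2 + γ * hAB.1.eigenvalues i) : ℝ) : ℂ) := by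
    simpa using hAB.1.det_smul_one_add_smul 2 γ
  have det_den (γ : ℝ) : ((1 : Matrix (Fin n) (Fin n) ℂ) + (γ : ℂ) • A).det
      = ((∏ i, (1 + γ * hA.1.eigenvalues i) : ℝ) : ℂ) := by
    simpa using hA.1.det_smul_one_add_smul 1 γ
  refine ⟨fun γ hγ => ⟨⟨_, ?_, det_num γ⟩, ⟨_, ?_, det_den γ⟩⟩, ?_⟩
  · exact prod_pos fun i _ => by have := hAB.eigenvalues_nonneg i; positivity
  · exact prod_pos fun i _ => by have := hA.eigenvalues_nonneg i; positivity
  simp only [det_num, det_den, Complex.ofReal_re]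
  refine tendsto_prod_add_mul_div_prod_add_mul_atTop _ _ two_pos one_pos
    hAB.eigenvalues_nonneg hA.eigenvalues_nonneg ?_
  rwa [← hAB.1.rank_eq_card_non_zero_eigs, ← hA.1.rank_eq_card_non_zero_eigs]
end
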